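/- In the p = 1, A = ∞ case there is no maximizer: for every decreasing u : (0,∞) → [0,∞) with u not identically 0 and ∫₀^∞ u(t) dt ≤ B, one has ∫₀^∞ G(u(t)) dt < B, while the functions u_n = (B/n)·χ_{(0,n)} satisfy ∫₀^∞ G(u_n(t)) dt = n·G(B/n) → B as n → ∞. -/

import Mathlib

open MeasureTheory

/-- The concentration function `G(s) = ∫₀ˢ exp(-(d!·τ)^{1/d}) dτ`. -/
noncomputable def G (d : ℕ) (s : ℝ) : ℝ :=
  ∫ τ in (0:ℝ)..s, Real.exp (-(((d.factorial : ℝ) * τ) ^ ((1:ℝ) / (d : ℝ))))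

/-!
Since `G(s) < s` for `s > 0` and a decreasing nonzero `u ≥ 0` is positive on an interval `(0, t₀)`,
the integral of `u - G(u)` is positive, so `∫ G(u) < ∫ u ≤ B`. For the step functions,
`n · G(B/n)` is `B` times a difference quotient of `G` at `0`, which tends to `G'(0) = exp 0 = 1`.
-/

open Filter Topology Set

theorem Ioo_subset_support_of_antitoneOn {u : ℝ → ℝ} (hu : AntitoneOn u (Ioi 0))
    (hnn : ∀ t ∈ Ioi (0:ℝ), 0 ≤ u t) {t₀ : ℝ} (ht₀ : 0 < t₀) (hne : u t₀ ≠ 0) :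
    Ioo 0 t₀ ⊆ Function.support u := fun _ ht =>
  ((lt_of_le_of_ne (hnn t₀ ht₀) hne.symm).trans_le (hu ht.1 ht₀ ht.2.le)).ne'

theorem integral_comp_lt_integral {α : Type*} [MeasurableSpace α] {μ : Measure α}
    {φ : ℝ → ℝ} (hφm : Measurable φ) (hφ0 : φ 0 = 0) (hφ : ∀ s > 0, φ s ∈ Ico 0 s)
    {u : α → ℝ} (hu : Integrable u μ) (hu_nonneg : 0 ≤ᵐ[μ] u)
    (hsupp : 0 < μ (Function.support u)) :
    ∫ x, φ (u x) ∂μ < ∫ x, u x ∂μ := by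
  have hφ_le : ∀ s, 0 ≤ s → 0 ≤ φ s ∧ φ s ≤ s := by
    intro s hs
    rcases hs.eq_or_lt with rfl | hs
    · simp [hφ0]
    · exact ⟨(hφ s hs).1, (hφ s hs).2.le⟩
  have hφu : Integrable (fun x => φ (u x)) μ := by
    refine hu.mono (hφm.comp_aemeasurable hu.aemeasurable).aestronglyMeasurable ?_
    filter_upwards [hu_nonneg] with x hx
    simp only [Real.norm_eq_abs, abs_of_nonneg hx, abs_of_nonneg (hφ_le _ hx).1]
    exact (hφ_le _ hx).2
  have hgap_nonneg : 0 ≤ᵐ[μ] fun x => u x - φ (u x) := by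
    filter_upwards [hu_nonneg] with x hx
    exact sub_nonneg.2 (hφ_le _ hx).2
  have hsupp_gap : Function.support u ≤ᵐ[μ] Function.support fun x => u x - φ (u x) := by
    filter_upwards [hu_nonneg] with x hx hux
    exact (sub_pos.2 (hφ _ (lt_of_le_of_ne hx (Ne.symm hux))).2).ne'
  have hgap : 0 < ∫ x, (u x - φ (u x)) ∂μ :=
    (integral_pos_iff_support_of_nonneg_ae hgap_nonneg (hu.sub hφu)).2
      (hsupp.trans_le (measure_mono_ae hsupp_gap))
  rw [integral_sub hu hφu] at hgap
  linarith

theorem setIntegral_Ioi_comp_lt_of_antitoneOn {φ : ℝ → ℝ} (hφm : Measurable φ) (hφ0 : φ 0 = 0)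
    (hφ : ∀ s > 0, φ s ∈ Ico 0 s) {B : ℝ} (hB : 0 ≤ B) {u : ℝ → ℝ} (hu : AntitoneOn u (Ioi 0))
    (hnn : ∀ t ∈ Ioi (0:ℝ), 0 ≤ u t) (hne : ∃ t ∈ Ioi (0:ℝ), u t ≠ 0)
    (hint : ∫⁻ t in Ioi (0:ℝ), ENNReal.ofReal (u t) ≤ ENNReal.ofReal B) :
    ∫ t in Ioi (0:ℝ), φ (u t) < B := by
  obtain ⟨t₀, ht₀, hut₀⟩ := hne
  have hmeas : AEMeasurable u (volume.restrict (Ioi 0)) :=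
    aemeasurable_restrict_of_antitoneOn measurableSet_Ioi hu
  have hu_nonneg : 0 ≤ᵐ[volume.restrict (Ioi 0)] u :=
    (ae_restrict_mem measurableSet_Ioi).mono hnn
  have hu_int : IntegrableOn u (Ioi 0) :=
    ⟨hmeas.aestronglyMeasurable,
      (hasFiniteIntegral_iff_ofReal hu_nonneg).2 (hint.trans_lt ENNReal.ofReal_lt_top)⟩
  have hu_le : ∫ t in Ioi (0:ℝ), u t ≤ B :=
    (integral_eq_lintegral_of_nonneg_ae hu_nonneg hmeas.aestronglyMeasurable).trans_le
      (ENNReal.toReal_le_of_le_ofReal hB hint)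
  have hsupp : 0 < volume.restrict (Ioi 0) (Function.support u) := by
    calc (0 : ENNReal) < volume (Ioo 0 t₀) := by simpa using ht₀
      _ = volume.restrict (Ioi 0) (Ioo 0 t₀) := by
        rw [Measure.restrict_apply measurableSet_Ioo, inter_eq_left.2 Ioo_subset_Ioi_self]
      _ ≤ _ := measure_mono (Ioo_subset_support_of_antitoneOn hu hnn ht₀ hut₀)
  exact (integral_comp_lt_integral hφm hφ0 hφ hu_int hu_nonneg hsupp).trans_le hu_le

theorem setIntegral_Ioi_comp_ite_lt {φ : ℝ → ℝ} (hφ0 : φ 0 = 0) {a : ℝ} (ha : 0 ≤ a) (c : ℝ) :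
    ∫ t in Ioi (0:ℝ), φ (if t < a then c else 0) = a * φ c := by
  have hstep : ∀ t, φ (if t < a then c else 0) = (Iio a).indicator (fun _ => φ c) t := by
    intro t
    by_cases h : t < a <;> simp [h, hφ0]
  simp_rw [hstep]
  rw [setIntegral_indicator measurableSet_Iio, setIntegral_const, Ioi_inter_Iio, Measure.real,
    Real.volume_Ioo, sub_zero, ENNReal.toReal_ofReal ha, smul_eq_mul]

theorem tendsto_nat_mul_comp_div_of_hasDerivAt {g : ℝ → ℝ} {g' : ℝ} (hg : HasDerivAt g g' 0)
    (hg0 : g 0 = 0) (B : ℝ) :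
    Tendsto (fun n : ℕ => (n : ℝ) * g (B / n)) atTop (𝓝 (g' * B)) := by
  have hscaled : HasDerivAt (fun x => g (B * x)) (g' * B) 0 := by
    have hg_at : HasDerivAt g g' (B * 0) := by simpa using hg
    exact hg_at.comp 0 ((hasDerivAt_id (0:ℝ)).const_mul B) |>.congr_deriv (by simp)
  have hinv : Tendsto (fun n : ℕ => (n : ℝ)⁻¹) atTop (𝓝[≠] 0) :=
    tendsto_nhdsWithin_of_tendsto_nhds_of_eventually_within _ tendsto_inv_atTop_nhds_zero_nat
      (eventually_gt_atTop 0 |>.mono fun n hn => by simpa using hn.ne')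
  refine (hscaled.tendsto_slope_zero.comp hinv).congr' ?_
  filter_upwards [eventually_gt_atTop 0] with n hn
  simp [hg0, div_eq_mul_inv]

section ConcentrationFunction

noncomputable def concentrationDensity (d : ℕ) (τ : ℝ) : ℝ :=
  Real.exp (-(((d.factorial : ℝ) * τ) ^ ((1:ℝ) / (d : ℝ))))

variable {d : ℕ}

theorem continuous_concentrationDensity (d : ℕ) : Continuous (concentrationDensity d) :=
  Real.continuous_exp.comp
    ((Real.continuous_rpow_const (by positivity)).comp (continuous_const.mul continuous_id)).neg

theorem concentrationDensity_le_one {τ : ℝ} (hτ : 0 ≤ τ) : concentrationDensity d τ ≤ 1 := by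
  rw [concentrationDensity, Real.exp_le_one_iff, neg_nonpos]
  positivity

theorem concentrationDensity_lt_one {τ : ℝ} (hτ : 0 < τ) : concentrationDensity d τ < 1 := by
  rw [concentrationDensity, Real.exp_lt_one_iff, neg_neg_iff_pos]
  positivity

theorem concentrationDensity_zero (hd : d ≠ 0) : concentrationDensity d 0 = 1 := by
  rw [concentrationDensity, mul_zero, Real.zero_rpow (by positivity), neg_zero, Real.exp_zero]

theorem G_eq_integral_concentrationDensity (s : ℝ) :
    G d s = ∫ τ in (0:ℝ)..s, concentrationDensity d τ := rfl

theorem G_zero : G d 0 = 0 := intervalIntegral.integral_same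

theorem G_nonneg {s : ℝ} (hs : 0 ≤ s) : 0 ≤ G d s :=
  intervalIntegral.integral_nonneg hs fun _ _ => (Real.exp_pos _).le

theorem G_lt_self {s : ℝ} (hs : 0 < s) : G d s < s := by
  have hlt := intervalIntegral.integral_lt_integral_of_continuousOn_of_le_of_exists_lt hs
    (continuous_concentrationDensity d).continuousOn continuousOn_const
    (fun τ hτ => concentrationDensity_le_one hτ.1.le) ⟨s, right_mem_Icc.2 hs.le,
      concentrationDensity_lt_one hs⟩
  simpa [G_eq_integral_concentrationDensity] using hlt

theorem continuous_G (d : ℕ) : Continuous (G d) :=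
  intervalIntegral.continuous_primitive
    (fun a b => (continuous_concentrationDensity d).intervalIntegrable a b) 0

theorem hasDerivAt_G_zero (hd : d ≠ 0) : HasDerivAt (G d) 1 0 := by
  rw [← concentrationDensity_zero hd]
  exact ((continuous_concentrationDensity d).integral_hasStrictDerivAt 0 0).hasDerivAt

end ConcentrationFunction

theorem stmt_13 (d : ℕ) (hd : 1 ≤ d) (B : ℝ) (hB : 0 < B) :
    (∀ u : ℝ → ℝ, AntitoneOn u (Set.Ioi 0) → (∀ t ∈ Set.Ioi (0:ℝ), 0 ≤ u t) →
      (∃ t ∈ Set.Ioi (0:ℝ), u t ≠ 0) →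
      (∫⁻ t in Set.Ioi (0:ℝ), ENNReal.ofReal (u t)) ≤ ENNReal.ofReal B →
      (∫ t in Set.Ioi (0:ℝ), G d (u t)) < B) ∧
    (∀ n : ℕ, (∫ t in Set.Ioi (0:ℝ), G d (if t < n then B / n else 0))
        = n * G d (B / n)) ∧
    Filter.Tendsto (fun n : ℕ => (n : ℝ) * G d (B / n)) Filter.atTop (nhds B) := by
  refine ⟨fun u hu hnn hne hint => ?_,
    fun n => setIntegral_Ioi_comp_ite_lt G_zero n.cast_nonneg _, ?_⟩
  · exact setIntegral_Ioi_comp_lt_of_antitoneOn (continuous_G d).measurable G_zero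
      (fun s hs => ⟨G_nonneg hs.le, G_lt_self hs⟩) hB.le hu hnn hne hint
  · simpa using tendsto_nat_mul_comp_div_of_hasDerivAt (hasDerivAt_G_zero (by omega)) G_zero B
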